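/- Let $m > 1$ and let $\mathcal{L}(i\tau,i\xi,v) = i\tau + |v|^{m-1}|\xi|^2$. For every multi-index $\alpha = (\alpha_\tau, \alpha_\xi) \in \mathbb{N}_0 \times \mathbb{N}_0^d$ there is a constant $C_\alpha$ such that for all $(\tau, \xi, v)$ with $\tau \ne 0$, $\xi \ne 0$ and $\mathcal{L}(i\tau,i\xi,v) \ne 0$, one has $\left| \partial_\tau^{\alpha_\tau} \partial_\xi^{\alpha_\xi} \frac{1}{\mathcal{L}(i\tau,i\xi,v)} \right| \le C_\alpha \frac{1}{|\mathcal{L}(i\tau,i\xi,v)|} |\tau|^{-\alpha_\tau} |\xi|^{-|\alpha_\xi|}$. -/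

import Mathlib

/-- The kinetic symbol `L(iτ, iξ, v) = iτ + |v|^{m-1}|ξ|²`. -/
noncomputable def kineticSymbol (d : ℕ) (m τ : ℝ) (ξ : Fin d → ℝ) (v : ℝ) : ℂ :=
  Complex.I * (τ : ℂ) + ((|v| ^ (m - 1) * ∑ i, ξ i ^ 2 : ℝ) : ℂ)

/-- Partial derivative in the `i`-th coordinate of `ξ`. -/
noncomputable def pderivXi (d : ℕ) (i : Fin d) (f : (Fin d → ℝ) → ℂ) :
    (Fin d → ℝ) → ℂ :=
  fun ξ => deriv (fun t : ℝ => f (Function.update ξ i t)) (ξ i)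

/-- Multi-index derivative `∂_ξ^α`. -/
noncomputable def mderivXi (d : ℕ) (α : Fin d → ℕ) (f : (Fin d → ℝ) → ℂ) :
    (Fin d → ℝ) → ℂ :=
  (List.finRange d).foldr (fun i g => (pderivXi d i)^[α i] g) f

/-!
Write `L = iτ + a|ξ|²` with `a = |v|^{m-1} ≥ 0`. Every derivative `∂_τ^p ∂_ξ^α (1/L)` is a linear
combination, with coefficients independent of `a, τ, ξ`, of terms `ξ^β a^N / L^{1+p+N}` with
`2N = |α| + |β|`: differentiating such a term in `τ` raises the power of `L` (since `∂_τ L = i`),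
and in `ξ_j` either lowers `β_j` or raises `β_j`, `N` and the power of `L` together. Each term is
bounded by `1 / (|L| |τ|^p |ξ|^{|α|})` because `|ξ^β| ≤ |ξ|^{|β|}`, `|τ| ≤ |L|` and `a|ξ|² ≤ |L|`.
-/

open Complex Function Finset Submodule Filter Topology

noncomputable section

theorem HasDerivAt.div_pow {𝕜 𝕜' : Type*} [NontriviallyNormedField 𝕜] [NontriviallyNormedField 𝕜']
    [NormedAlgebra 𝕜 𝕜'] {f c : 𝕜 → 𝕜'} {f' c' : 𝕜'} {x : 𝕜} (hc : HasDerivAt c c' x)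
    (hf : HasDerivAt f f' x) (hfx : f x ≠ 0) (k : ℕ) :
    HasDerivAt (fun t => c t / f t ^ k) (c' / f x ^ k - k * c x * f' / f x ^ (k + 1)) x := by
  refine (hc.div (hf.fun_pow k) (pow_ne_zero k hfx)).congr_deriv ?_
  rcases k with _ | k
  · simp
  · rw [Nat.add_sub_cancel]
    field_simp
    ring

theorem sum_sq_pos {ι : Type*} [Fintype ι] {ξ : ι → ℝ} (hξ : ξ ≠ 0) : 0 < ∑ i, ξ i ^ 2 := by
  obtain ⟨j, hj⟩ := Function.ne_iff.1 hξ
  exact sum_pos' (fun i _ => sq_nonneg _) ⟨j, mem_univ j, sq_pos_of_ne_zero (by simpa using hj)⟩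

theorem sum_sq_update {ι : Type*} [Fintype ι] [DecidableEq ι] (ξ : ι → ℝ) (i : ι) (t : ℝ) :
    ∑ j, update ξ i t j ^ 2 = t ^ 2 + ∑ j ∈ univ \ {i}, ξ j ^ 2 := by
  have h : (fun j => update ξ i t j ^ 2) = update (fun j => ξ j ^ 2) i (t ^ 2) :=
    funext (apply_update (fun _ x => x ^ 2) ξ i t)
  rw [h, sum_update_of_mem (mem_univ i)]

theorem prod_pow_update_update {ι : Type*} [Fintype ι] [DecidableEq ι] (ξ : ι → ℝ) (β : ι → ℕ)
    (i : ι) (t : ℝ) (n : ℕ) :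
    ∏ j, ((update ξ i t j : ℝ) : ℂ) ^ update β i n j
      = (t : ℂ) ^ n * ∏ j ∈ univ \ {i}, (ξ j : ℂ) ^ β j := by
  have h : (fun j => ((update ξ i t j : ℝ) : ℂ) ^ update β i n j)
      = update (fun j => (ξ j : ℂ) ^ β j) i ((t : ℂ) ^ n) :=
    funext (apply_update₂ (fun _ (x : ℝ) (e : ℕ) => (x : ℂ) ^ e) ξ β i t n)
  rw [h, prod_update_of_mem (mem_univ i)]

theorem norm_prod_pow_le {ι : Type*} [Fintype ι] (ξ : ι → ℝ) (β : ι → ℕ) :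
    ‖∏ i, (ξ i : ℂ) ^ β i‖ ≤ √(∑ i, ξ i ^ 2) ^ ∑ i, β i := by
  rw [norm_prod, ← prod_pow_eq_pow_sum]
  refine prod_le_prod (fun i _ => norm_nonneg _) fun i _ => ?_
  rw [norm_pow, norm_real, Real.norm_eq_abs]
  exact pow_le_pow_left₀ (abs_nonneg _)
    (Real.abs_le_sqrt (single_le_sum (fun j _ => sq_nonneg (ξ j)) (mem_univ i))) _

variable {d : ℕ}

def parabolicSymbol (d : ℕ) (a τ : ℝ) (ξ : Fin d → ℝ) : ℂ :=
  I * τ + ((a * ∑ i, ξ i ^ 2 : ℝ) : ℂ)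

theorem kineticSymbol_eq_parabolicSymbol (m τ : ℝ) (ξ : Fin d → ℝ) (v : ℝ) :
    kineticSymbol d m τ ξ v = parabolicSymbol d (|v| ^ (m - 1)) τ ξ :=
  rfl

section Symbol

variable {a τ : ℝ} {ξ : Fin d → ℝ}

theorem parabolicSymbol_re : (parabolicSymbol d a τ ξ).re = a * ∑ i, ξ i ^ 2 := by
  rw [parabolicSymbol, add_re, ofReal_re]
  simp

theorem parabolicSymbol_im : (parabolicSymbol d a τ ξ).im = τ := by
  rw [parabolicSymbol, add_im, ofReal_im]
  simp

theorem parabolicSymbol_ne_zero (hτ : τ ≠ 0) : parabolicSymbol d a τ ξ ≠ 0 := fun h =>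
  hτ (by simpa [parabolicSymbol_im] using congrArg im h)

theorem abs_le_norm_parabolicSymbol : |τ| ≤ ‖parabolicSymbol d a τ ξ‖ := by
  simpa [parabolicSymbol_im] using abs_im_le_norm (parabolicSymbol d a τ ξ)

theorem mul_sum_sq_le_norm_parabolicSymbol : a * ∑ i, ξ i ^ 2 ≤ ‖parabolicSymbol d a τ ξ‖ := by
  simpa [parabolicSymbol_re] using re_le_norm (parabolicSymbol d a τ ξ)

theorem hasDerivAt_parabolicSymbol_tau :
    HasDerivAt (fun t => parabolicSymbol d a t ξ) I τ := by
  simpa [parabolicSymbol] using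
    ((hasDerivAt_id τ).ofReal_comp.const_mul I).add_const ((a * ∑ i, ξ i ^ 2 : ℝ) : ℂ)

theorem hasDerivAt_parabolicSymbol_update (i : Fin d) :
    HasDerivAt (fun t => parabolicSymbol d a τ (update ξ i t)) (2 * a * ξ i) (ξ i) := by
  have h := (((hasDerivAt_pow 2 (ξ i)).add_const (∑ j ∈ univ \ {i}, ξ j ^ 2)).const_mul
    a).ofReal_comp.const_add (I * τ)
  simp only [parabolicSymbol, sum_sq_update ξ]
  refine h.congr_deriv ?_
  push_cast
  ring

end Symbol

def symbolTerm (β : Fin d → ℕ) (N k : ℕ) (a τ : ℝ) (ξ : Fin d → ℝ) : ℂ :=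
  (∏ i, (ξ i : ℂ) ^ β i) * (a : ℂ) ^ N / parabolicSymbol d a τ ξ ^ k

/-- `p` and `q` count the derivatives of `1/L` taken in `τ` and in `ξ`. -/
def symbolClass (d p q : ℕ) : Submodule ℂ (ℝ → ℝ → (Fin d → ℝ) → ℂ) :=
  span ℂ {F | ∃ (β : Fin d → ℕ) (N : ℕ), 2 * N = q + ∑ i, β i ∧ F = symbolTerm β N (1 + p + N)}

def symbolWeight (p q : ℕ) (a τ : ℝ) (ξ : Fin d → ℝ) : ℝ :=
  1 / ‖parabolicSymbol d a τ ξ‖ * |τ| ^ (-(p : ℝ)) * √(∑ i, ξ i ^ 2) ^ (-(q : ℝ))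

theorem symbolTerm_mem_symbolClass {p q N k : ℕ} {β : Fin d → ℕ} (hN : 2 * N = q + ∑ i, β i)
    (hk : k = 1 + p + N) : symbolTerm β N k ∈ symbolClass d p q :=
  subset_span ⟨β, N, hN, hk ▸ rfl⟩

theorem inv_parabolicSymbol_mem_symbolClass :
    (fun a τ ξ => (parabolicSymbol d a τ ξ)⁻¹) ∈ symbolClass d 0 0 := by
  convert symbolTerm_mem_symbolClass (p := 0) (q := 0) (β := 0) (N := 0) (k := 1) (by simp) rfl
    using 1
  funext a τ ξ
  simp [symbolTerm]

section Derivatives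

variable (β : Fin d → ℕ) (N k : ℕ) {a τ : ℝ} (ξ : Fin d → ℝ)

theorem hasDerivAt_symbolTerm_tau (hτ : τ ≠ 0) :
    HasDerivAt (fun t => symbolTerm β N k a t ξ) (-(k * I) * symbolTerm β N (k + 1) a τ ξ) τ := by
  refine ((hasDerivAt_const τ _).div_pow hasDerivAt_parabolicSymbol_tau
    (parabolicSymbol_ne_zero hτ) k).congr_deriv ?_
  simp only [symbolTerm]
  ring

theorem hasDerivAt_symbolTerm_update (i : Fin d) (hτ : τ ≠ 0) :
    HasDerivAt (fun t => symbolTerm β N k a τ (update ξ i t))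
      (β i * symbolTerm (update β i (β i - 1)) N k a τ ξ
        - 2 * k * symbolTerm (update β i (β i + 1)) (N + 1) (k + 1) a τ ξ) (ξ i) := by
  set P := ∏ j ∈ univ \ {i}, (ξ j : ℂ) ^ β j
  have hline (t : ℝ) : ∏ j, ((update ξ i t j : ℝ) : ℂ) ^ β j = t ^ β i * P := by
    simpa only [update_eq_self] using prod_pow_update_update ξ β i t (β i)
  have hpoint (n : ℕ) : ∏ j, (ξ j : ℂ) ^ update β i n j = ξ i ^ n * P := by
    simpa only [update_eq_self] using prod_pow_update_update ξ β i (ξ i) n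
  have hnum : HasDerivAt (fun t : ℝ => (t : ℂ) ^ β i * P * a ^ N)
      (β i * ξ i ^ (β i - 1) * P * a ^ N) (ξ i) := by
    simpa using (((hasDerivAt_id (ξ i)).ofReal_comp.fun_pow (β i)).mul_const P).mul_const
      ((a : ℂ) ^ N)
  have h := hnum.div_pow (hasDerivAt_parabolicSymbol_update (a := a) i)
    (parabolicSymbol_ne_zero hτ) k
  rw [update_eq_self] at h
  simp only [symbolTerm, hline, hpoint]
  refine h.congr_deriv ?_
  ring

end Derivatives

section Bounds

variable {a τ : ℝ} {ξ : Fin d → ℝ}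

theorem symbolWeight_eq (p q : ℕ) :
    symbolWeight p q a τ ξ
      = (‖parabolicSymbol d a τ ξ‖ * |τ| ^ p * √(∑ i, ξ i ^ 2) ^ q)⁻¹ := by
  rw [symbolWeight, Real.rpow_neg (abs_nonneg τ), Real.rpow_neg (Real.sqrt_nonneg _),
    Real.rpow_natCast, Real.rpow_natCast, one_div, mul_inv, mul_inv]

theorem symbolWeight_nonneg (p q : ℕ) : 0 ≤ symbolWeight p q a τ ξ := by
  rw [symbolWeight_eq]
  positivity

theorem norm_symbolTerm_le {p q N : ℕ} {β : Fin d → ℕ} (hN : 2 * N = q + ∑ i, β i)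
    (ha : 0 ≤ a) (hτ : τ ≠ 0) (hξ : ξ ≠ 0) :
    ‖symbolTerm β N (1 + p + N) a τ ξ‖ ≤ symbolWeight p q a τ ξ := by
  set s := √(∑ i, ξ i ^ 2)
  set A := ‖parabolicSymbol d a τ ξ‖
  have hs : 0 < s := Real.sqrt_pos.2 (sum_sq_pos hξ)
  have hA : 0 < A := norm_pos_iff.2 (parabolicSymbol_ne_zero hτ)
  have hτA : |τ| ≤ A := abs_le_norm_parabolicSymbol
  have haA : a * s ^ 2 ≤ A := by
    rw [Real.sq_sqrt (sum_sq_pos hξ).le]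
    exact mul_sum_sq_le_norm_parabolicSymbol
  have key : ‖∏ i, (ξ i : ℂ) ^ β i‖ * a ^ N * (A * |τ| ^ p * s ^ q) ≤ A ^ (1 + p + N) :=
    calc ‖∏ i, (ξ i : ℂ) ^ β i‖ * a ^ N * (A * |τ| ^ p * s ^ q)
        ≤ s ^ (∑ i, β i) * a ^ N * (A * |τ| ^ p * s ^ q) := by
          gcongr
          exact norm_prod_pow_le ξ β
      _ = A * |τ| ^ p * (a * s ^ 2) ^ N := by
          rw [mul_pow, ← pow_mul, hN, pow_add]
          ring
      _ ≤ A * A ^ p * A ^ N := by gcongr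
      _ = A ^ (1 + p + N) := by ring
  rw [symbolWeight_eq, symbolTerm, norm_div, norm_mul, norm_pow, norm_pow, norm_real,
    Real.norm_of_nonneg ha, ← one_div, le_div_iff₀ (by positivity), div_mul_eq_mul_div,
    div_le_one (by positivity)]
  exact key

end Bounds

namespace symbolClass

variable {p q : ℕ} {F : ℝ → ℝ → (Fin d → ℝ) → ℂ}

theorem exists_norm_le (hF : F ∈ symbolClass d p q) :
    ∃ C > 0, ∀ a τ ξ, 0 ≤ a → τ ≠ 0 → ξ ≠ 0 → ‖F a τ ξ‖ ≤ C * symbolWeight p q a τ ξ := by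
  induction hF using span_induction with
  | mem F hF =>
    obtain ⟨β, N, hN, rfl⟩ := hF
    exact ⟨1, one_pos, fun a τ ξ ha hτ hξ => by
      simpa using norm_symbolTerm_le hN ha hτ hξ⟩
  | zero => exact ⟨1, one_pos, fun a τ ξ _ _ _ => by simpa using symbolWeight_nonneg p q⟩
  | add F G _ _ hF hG =>
    obtain ⟨C₁, hC₁, hF⟩ := hF
    obtain ⟨C₂, hC₂, hG⟩ := hG
    refine ⟨C₁ + C₂, by positivity, fun a τ ξ ha hτ hξ => ?_⟩
    calc ‖F a τ ξ + G a τ ξ‖ ≤ ‖F a τ ξ‖ + ‖G a τ ξ‖ := norm_add_le _ _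
      _ ≤ C₁ * symbolWeight p q a τ ξ + C₂ * symbolWeight p q a τ ξ :=
          add_le_add (hF a τ ξ ha hτ hξ) (hG a τ ξ ha hτ hξ)
      _ = (C₁ + C₂) * symbolWeight p q a τ ξ := (add_mul _ _ _).symm
  | smul c F _ hF =>
    obtain ⟨C, hC, hF⟩ := hF
    refine ⟨(‖c‖ + 1) * C, by positivity, fun a τ ξ ha hτ hξ => ?_⟩
    calc ‖c * F a τ ξ‖ = ‖c‖ * ‖F a τ ξ‖ := norm_mul _ _
      _ ≤ ‖c‖ * (C * symbolWeight p q a τ ξ) := by gcongr; exact hF a τ ξ ha hτ hξ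
      _ ≤ (‖c‖ + 1) * (C * symbolWeight p q a τ ξ) := by
          have := symbolWeight_nonneg (a := a) (τ := τ) (ξ := ξ) p q
          gcongr
          linarith
      _ = (‖c‖ + 1) * C * symbolWeight p q a τ ξ := (mul_assoc _ _ _).symm

theorem exists_hasDerivAt_tau (hF : F ∈ symbolClass d p q) :
    ∃ G ∈ symbolClass d (p + 1) q,
      ∀ a τ ξ, τ ≠ 0 → HasDerivAt (fun t => F a t ξ) (G a τ ξ) τ := by
  induction hF using span_induction with
  | mem F hF =>
    obtain ⟨β, N, hN, rfl⟩ := hF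
    exact ⟨(-((1 + p + N : ℕ) * I)) • symbolTerm β N (1 + p + N + 1),
      smul_mem _ _ (symbolTerm_mem_symbolClass hN (by omega)),
      fun a τ ξ hτ => hasDerivAt_symbolTerm_tau β N _ ξ hτ⟩
  | zero => exact ⟨0, zero_mem _, fun _ τ _ _ => hasDerivAt_const τ 0⟩
  | add F G _ _ hF hG =>
    obtain ⟨F', hF'mem, hF'⟩ := hF
    obtain ⟨G', hG'mem, hG'⟩ := hG
    exact ⟨F' + G', add_mem hF'mem hG'mem,
      fun a τ ξ hτ => (hF' a τ ξ hτ).add (hG' a τ ξ hτ)⟩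
  | smul c F _ hF =>
    obtain ⟨F', hF'mem, hF'⟩ := hF
    exact ⟨c • F', smul_mem _ c hF'mem, fun a τ ξ hτ => (hF' a τ ξ hτ).const_mul c⟩

theorem exists_hasDerivAt_update (i : Fin d) (hF : F ∈ symbolClass d p q) :
    ∃ G ∈ symbolClass d p (q + 1),
      ∀ a τ ξ, τ ≠ 0 → HasDerivAt (fun t => F a τ (update ξ i t)) (G a τ ξ) (ξ i) := by
  induction hF using span_induction with
  | mem F hF =>
    obtain ⟨β, N, hN, rfl⟩ := hF
    have hsum (n : ℕ) : ∑ j, update β i n j = n + ∑ j ∈ univ \ {i}, β j :=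
      sum_update_of_mem (mem_univ i) β n
    have hβ : ∑ j, β j = β i + ∑ j ∈ univ \ {i}, β j := by simpa using hsum (β i)
    refine ⟨(β i : ℂ) • symbolTerm (update β i (β i - 1)) N (1 + p + N)
        - (2 * (1 + p + N : ℕ) : ℂ) • symbolTerm (update β i (β i + 1)) (N + 1) (1 + p + N + 1),
      sub_mem ?_ (smul_mem _ _ (symbolTerm_mem_symbolClass (by rw [hsum]; omega) (by omega))),
      fun a τ ξ hτ => hasDerivAt_symbolTerm_update β N _ ξ i hτ⟩
    rcases Nat.eq_zero_or_pos (β i) with h0 | hpos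
    · simp [h0]
    · exact smul_mem _ _ (symbolTerm_mem_symbolClass (by rw [hsum]; omega) rfl)
  | zero => exact ⟨0, zero_mem _, fun _ _ ξ _ => hasDerivAt_const (ξ i) 0⟩
  | add F G _ _ hF hG =>
    obtain ⟨F', hF'mem, hF'⟩ := hF
    obtain ⟨G', hG'mem, hG'⟩ := hG
    exact ⟨F' + G', add_mem hF'mem hG'mem,
      fun a τ ξ hτ => (hF' a τ ξ hτ).add (hG' a τ ξ hτ)⟩
  | smul c F _ hF =>
    obtain ⟨F', hF'mem, hF'⟩ := hF
    exact ⟨c • F', smul_mem _ c hF'mem, fun a τ ξ hτ => (hF' a τ ξ hτ).const_mul c⟩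

theorem exists_iterate_deriv_eq (n : ℕ) (hF : F ∈ symbolClass d p q) :
    ∃ G ∈ symbolClass d (p + n) q, ∀ a ξ (f : ℝ → ℂ), (∀ τ, τ ≠ 0 → f τ = F a τ ξ) →
      ∀ τ, τ ≠ 0 → deriv^[n] f τ = G a τ ξ := by
  induction n generalizing p F with
  | zero => exact ⟨F, hF, fun a ξ f hf => hf⟩
  | succ n ih =>
    obtain ⟨F', hF'mem, hF'⟩ := exists_hasDerivAt_tau hF
    obtain ⟨G, hGmem, hG⟩ := ih hF'mem
    refine ⟨G, by rwa [add_assoc, add_comm 1] at hGmem, fun a ξ f hf τ hτ => ?_⟩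
    rw [iterate_succ_apply]
    refine hG a ξ (deriv f) (fun τ' hτ' => ?_) τ hτ
    have hfF : f =ᶠ[𝓝 τ'] fun t => F a t ξ := (eventually_ne_nhds hτ').mono hf
    rw [hfF.deriv_eq, (hF' a τ' ξ hτ').deriv]

theorem exists_pderivXi_eq (i : Fin d) (hF : F ∈ symbolClass d p q) :
    ∃ G ∈ symbolClass d p (q + 1), ∀ a τ, τ ≠ 0 → pderivXi d i (F a τ) = G a τ := by
  obtain ⟨G, hGmem, hG⟩ := exists_hasDerivAt_update i hF
  exact ⟨G, hGmem, fun a τ hτ => funext fun ξ => (hG a τ ξ hτ).deriv⟩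

theorem exists_iterate_pderivXi_eq (i : Fin d) (n : ℕ) (hF : F ∈ symbolClass d p q) :
    ∃ G ∈ symbolClass d p (q + n), ∀ a τ, τ ≠ 0 → (pderivXi d i)^[n] (F a τ) = G a τ := by
  induction n generalizing q F with
  | zero => exact ⟨F, hF, fun _ _ _ => rfl⟩
  | succ n ih =>
    obtain ⟨F', hF'mem, hF'⟩ := exists_pderivXi_eq i hF
    obtain ⟨G, hGmem, hG⟩ := ih hF'mem
    refine ⟨G, by rwa [add_assoc, add_comm 1] at hGmem, fun a τ hτ => ?_⟩
    rw [iterate_succ_apply, hF' a τ hτ, hG a τ hτ]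

theorem exists_mderivXi_eq (α : Fin d → ℕ) (hF : F ∈ symbolClass d p q) :
    ∃ G ∈ symbolClass d p (q + ∑ i, α i), ∀ a τ, τ ≠ 0 → mderivXi d α (F a τ) = G a τ := by
  suffices ∀ (l : List (Fin d)) {q F}, F ∈ symbolClass d p q →
      ∃ G ∈ symbolClass d p (q + (l.map α).sum), ∀ a τ, τ ≠ 0 →
        l.foldr (fun i g => (pderivXi d i)^[α i] g) (F a τ) = G a τ by
    simpa only [mderivXi, Fin.sum_univ_def] using this (List.finRange d) hF
  intro l
  induction l with
  | nil => exact fun hF => ⟨_, hF, fun _ _ _ => rfl⟩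
  | cons i l ih =>
    intro q F hF
    obtain ⟨F', hF'mem, hF'⟩ := ih hF
    obtain ⟨G, hGmem, hG⟩ := exists_iterate_pderivXi_eq i (α i) hF'mem
    refine ⟨G, by rwa [List.map_cons, List.sum_cons, add_comm (α i), ← add_assoc],
      fun a τ hτ => ?_⟩
    rw [List.foldr_cons, hF' a τ hτ, hG a τ hτ]

end symbolClass

theorem inverse_symbol_derivative_bounds_general (d : ℕ) (m : ℝ)
    (ατ : ℕ) (αξ : Fin d → ℕ) :
    ∃ C : ℝ, 0 < C ∧ ∀ (τ : ℝ) (ξ : Fin d → ℝ) (v : ℝ),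
      τ ≠ 0 → ξ ≠ 0 → kineticSymbol d m τ ξ v ≠ 0 →
      ‖(deriv^[ατ]
          (fun τ' : ℝ => mderivXi d αξ (fun ξ' => (kineticSymbol d m τ' ξ' v)⁻¹) ξ)) τ‖ ≤
        C * (1 / ‖kineticSymbol d m τ ξ v‖) * |τ| ^ (-(ατ : ℝ)) *
          Real.sqrt (∑ i, ξ i ^ 2) ^ (-((∑ i, αξ i : ℕ) : ℝ)) := by
  obtain ⟨G, hGmem, hG⟩ :=
    symbolClass.exists_mderivXi_eq αξ inv_parabolicSymbol_mem_symbolClass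
  obtain ⟨H, hHmem, hH⟩ := symbolClass.exists_iterate_deriv_eq ατ hGmem
  obtain ⟨C, hC, hCH⟩ := symbolClass.exists_norm_le hHmem
  refine ⟨C, hC, fun τ ξ v hτ hξ _ => ?_⟩
  have ha : 0 ≤ |v| ^ (m - 1) := by positivity
  simp only [kineticSymbol_eq_parabolicSymbol]
  rw [hH (|v| ^ (m - 1)) ξ _ (fun τ' hτ' => congrFun (hG _ τ' hτ') ξ) τ hτ]
  simpa only [symbolWeight, zero_add, mul_assoc]
    using hCH _ τ ξ ha hτ hξ

/-- Lemma B.3: derivative bounds for the inverse kinetic symbol. -/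
theorem inverse_symbol_derivative_bounds (d : ℕ) (m : ℝ) (hm : 1 < m)
    (ατ : ℕ) (αξ : Fin d → ℕ) :
    ∃ C : ℝ, 0 < C ∧ ∀ (τ : ℝ) (ξ : Fin d → ℝ) (v : ℝ),
      τ ≠ 0 → ξ ≠ 0 → kineticSymbol d m τ ξ v ≠ 0 →
      ‖(deriv^[ατ]
          (fun τ' : ℝ => mderivXi d αξ (fun ξ' => (kineticSymbol d m τ' ξ' v)⁻¹) ξ)) τ‖ ≤
        C * (1 / ‖kineticSymbol d m τ ξ v‖) * |τ| ^ (-(ατ : ℝ)) *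
          Real.sqrt (∑ i, ξ i ^ 2) ^ (-((∑ i, αξ i : ℕ) : ℝ)) :=
  inverse_symbol_derivative_bounds_general d m ατ αξ
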